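/- For n ≥ 1, the critical exponents satisfy: if μ < μ_c(n) := (n²+n+2)/(n+2), then p_S(n+μ) > p_F(n) := 1 + 2/n, and if μ = μ_c(n) then p_S(n+μ) = p_F(n), where p_S(d) is the positive root of (d−1)p² − (d+1)p − 2 = 0. -/

import Mathlib

theorem stmt_12 (n : ℕ) (hn : 1 ≤ n) (μ : ℝ) (hμ : 0 ≤ μ) (p : ℝ) (hp : 0 < p)
    (hroot : ((n : ℝ) + μ - 1) * p ^ 2 - ((n : ℝ) + μ + 1) * p - 2 = 0) :
    (μ < ((n : ℝ) ^ 2 + n + 2) / (n + 2) → 1 + 2 / (n : ℝ) < p) ∧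
    (μ = ((n : ℝ) ^ 2 + n + 2) / (n + 2) → p = 1 + 2 / (n : ℝ)) := by
  have hn1 : (1 : ℝ) ≤ n := by exact_mod_cast hn
  have hn0 : (0 : ℝ) < n := by linarith
  set q : ℝ := 1 + 2 / (n : ℝ) with hqdef
  have hq0 : 0 < q := by positivity
  -- d - 1 > 0
  have hd : 0 < (n : ℝ) + μ - 1 := by
    by_contra h
    push_neg at h
    nlinarith [sq_nonneg p, mul_nonneg (neg_nonneg.mpr h) (sq_nonneg p)]
  -- (d-1) p > d + 1
  have hb : (n : ℝ) + μ + 1 < ((n : ℝ) + μ - 1) * p := by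
    nlinarith [mul_pos hd hp]
  -- bracket positive
  have hbr : 0 < ((n : ℝ) + μ - 1) * (p + q) - ((n : ℝ) + μ + 1) := by
    nlinarith [mul_pos hd hq0]
  -- value at q
  have hF : (n : ℝ) ^ 2 * (((n : ℝ) + μ - 1) * q ^ 2 - ((n : ℝ) + μ + 1) * q - 2)
      = 2 * (μ * (n + 2) - ((n : ℝ) ^ 2 + n + 2)) := by
    rw [hqdef]; field_simp; ring
  have hident : (((n : ℝ) + μ - 1) * p ^ 2 - ((n : ℝ) + μ + 1) * p - 2)
      - (((n : ℝ) + μ - 1) * q ^ 2 - ((n : ℝ) + μ + 1) * q - 2)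
      = (p - q) * (((n : ℝ) + μ - 1) * (p + q) - ((n : ℝ) + μ + 1)) := by ring
  have hn2 : (0 : ℝ) < (n : ℝ) + 2 := by linarith
  constructor
  · intro h
    have hμn : μ * ((n : ℝ) + 2) < (n : ℝ) ^ 2 + n + 2 := by
      rwa [lt_div_iff₀ hn2] at h
    by_contra hle
    push_neg at hle
    have hFneg : ((n : ℝ) + μ - 1) * q ^ 2 - ((n : ℝ) + μ + 1) * q - 2 < 0 := by
      nlinarith [sq_nonneg (n : ℝ)]
    nlinarith [mul_nonneg (sub_nonneg.mpr hle) hbr.le]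
  · intro h
    have hμn : μ * ((n : ℝ) + 2) = (n : ℝ) ^ 2 + n + 2 := by
      rw [h, div_mul_cancel₀ _ hn2.ne']
    have hFzero : ((n : ℝ) + μ - 1) * q ^ 2 - ((n : ℝ) + μ + 1) * q - 2 = 0 := by
      have h2 : (n : ℝ) ^ 2 * (((n : ℝ) + μ - 1) * q ^ 2 - ((n : ℝ) + μ + 1) * q - 2) = 0 := by
        rw [hF, hμn]; ring
      exact (mul_eq_zero.mp h2).resolve_left (pow_ne_zero 2 hn0.ne')
    have : (p - q) * (((n : ℝ) + μ - 1) * (p + q) - ((n : ℝ) + μ + 1)) = 0 := by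
      rw [← hident, hroot, hFzero]; ring
    rcases mul_eq_zero.mp this with h0 | h0
    · linarith [sub_eq_zero.mp h0]
    · linarith
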